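/- arXiv:2001.11740 — 5 statements merged into one kernel-verified Lean document; each statement's English description precedes it below -/
import Mathlib

section
/- Suppose there exists γ* > 0 with γ_j ≥ γ* for all j ≥ 1. Then for every d ∈ ℕ, setting ε_d = (1/2)·(γ*·λ_2)^{d/2} ∈ (0,1), one has n(ε_d, d) ≥ 2^d. Consequently, none of EXP-SPT, EXP-PT, EXP-QPT holds. -/
/-! With `a = γ*·λ_2`, every factor `λ_{k,1} = 1` and `λ_{k,2} = γ_k λ_2` is at least `a`, so all
`2^d` tuples with entries in `{1, 2}` have product at least `a^d > ε_d²`. Since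
`log ε_d⁻¹ = log 2 + (d/2) log a⁻¹` is only linear in `d`, EXP-QPT would bound `2^d` by
`exp (A (1 + log d)²)` for a constant `A`, which fails for large `d`; EXP-SPT and EXP-PT are
stronger than EXP-QPT. -/

open Filter Real Set Topology
open scoped ENNReal NNReal

noncomputable section

/-- The weighted eigenvalues `λ_{k,j}`: `1` if `j = 1`, and `γ_k · λ_j` if `j ≥ 2`. -/
def lamKJ (γ lam : ℕ → ℝ) (k j : ℕ) : ℝ := if j = 1 then 1 else γ k * lam j

/-- The information complexity `n(ε,d)`: the extended-natural cardinality of the set of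
`d`-tuples of positive integers `(n_1,…,n_d)` with `λ_{1,n_1} ⋯ λ_{d,n_d} > ε²`. -/
def infoN (γ lam : ℕ → ℝ) (ε : ℝ) (d : ℕ) : ℕ∞ :=
  {n : Fin d → ℕ | (∀ i, 1 ≤ n i) ∧ ε ^ 2 < ∏ i, lamKJ γ lam (i.1 + 1) (n i)}.encard

/-- EXP-SPT with a given exponent `p`: there is `C ≥ 0` with
`n(ε,d) ≤ C (1 + log ε⁻¹)^p` for all `d ≥ 1` and `ε ∈ (0,1]`. -/
def ExpSPTwith (γ lam : ℕ → ℝ) (p : ℝ) : Prop :=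
  ∃ C : ℝ, 0 ≤ C ∧ ∀ d : ℕ, 1 ≤ d → ∀ ε : ℝ, 0 < ε → ε ≤ 1 →
    (infoN γ lam ε d : ℝ≥0∞) ≤ ENNReal.ofReal (C * (1 + Real.log ε⁻¹) ^ p)

/-- Exponential strong polynomial tractability. -/
def ExpSPT (γ lam : ℕ → ℝ) : Prop := ∃ p : ℝ, 0 ≤ p ∧ ExpSPTwith γ lam p

/-- Exponential polynomial tractability: there are `C, q, p ≥ 0` with
`n(ε,d) ≤ C d^q (1 + log ε⁻¹)^p` for all `d ≥ 1` and `ε ∈ (0,1]`. -/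
def ExpPT (γ lam : ℕ → ℝ) : Prop :=
  ∃ C q p : ℝ, 0 ≤ C ∧ 0 ≤ q ∧ 0 ≤ p ∧ ∀ d : ℕ, 1 ≤ d → ∀ ε : ℝ, 0 < ε → ε ≤ 1 →
    (infoN γ lam ε d : ℝ≥0∞) ≤ ENNReal.ofReal (C * (d : ℝ) ^ q * (1 + Real.log ε⁻¹) ^ p)

/-- EXP-QPT with a given exponent `t`. -/
def ExpQPTwith (γ lam : ℕ → ℝ) (t : ℝ) : Prop :=
  ∃ C : ℝ, 0 ≤ C ∧ ∀ d : ℕ, 1 ≤ d → ∀ ε : ℝ, 0 < ε → ε ≤ 1 →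
    (infoN γ lam ε d : ℝ≥0∞) ≤
      ENNReal.ofReal (C * Real.exp (t * (1 + Real.log d) * (1 + Real.log (1 + Real.log ε⁻¹))))

/-- Exponential quasi-polynomial tractability. -/
def ExpQPT (γ lam : ℕ → ℝ) : Prop := ∃ t : ℝ, 0 ≤ t ∧ ExpQPTwith γ lam t

/-- Exponential `(s,t)`-weak tractability:
`log max(1, n(ε,d)) / (d^t + (1 + log ε⁻¹)^s) → 0` as `d + ε⁻¹ → ∞`
(in particular `n(ε,d)` is finite for all such `d, ε`). -/
def ExpSTWT (γ lam : ℕ → ℝ) (s t : ℝ) : Prop :=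
  ∀ δ : ℝ, 0 < δ → ∃ T : ℝ, ∀ d : ℕ, 1 ≤ d → ∀ ε : ℝ, 0 < ε → ε ≤ 1 →
    T ≤ (d : ℝ) + ε⁻¹ →
    ∃ N : ℕ, infoN γ lam ε d = (N : ℕ∞) ∧
      Real.log (max 1 (N : ℝ)) / ((d : ℝ) ^ t + (1 + Real.log ε⁻¹) ^ s) < δ

/-- `j(ε) = max { j ≥ 1 : λ_j > ε² }` (a well-defined maximum when `λ_j → 0`). -/
def jEps (lam : ℕ → ℝ) (ε : ℝ) : ℕ := sSup {j : ℕ | 1 ≤ j ∧ ε ^ 2 < lam j}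

/-- `d(ε) = max { d ≥ 1 : γ_d > ε² }`, with `d(ε) = 0` if `γ_1 ≤ ε²`
(a well-defined maximum when `γ_d → 0`). -/
def dEps (γ : ℕ → ℝ) (ε : ℝ) : ℕ := sSup {d : ℕ | 1 ≤ d ∧ ε ^ 2 < γ d}

open Asymptotics

lemma exists_exp_mul_one_add_log_sq_lt_two_pow (A : ℝ) :
    ∃ d : ℕ, 1 ≤ d ∧ exp (A * (1 + log d) ^ 2) < 2 ^ d := by
  have hlittleO : (fun x : ℝ => A * (1 + log x) ^ 2) =o[atTop] id :=
    ((((isLittleO_const_id_atTop 1).add (isLittleO_log_id_atTop.const_mul_left 2)).add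
      (isLittleO_pow_log_id_atTop (n := 2))).congr_left fun x => by ring).const_mul_left A
  have hbound := (hlittleO.comp_tendsto tendsto_natCast_atTop_atTop).bound
    (half_pos (log_pos one_lt_two))
  obtain ⟨d, hd, hd1⟩ := (hbound.and (eventually_ge_atTop 1)).exists
  refine ⟨d, hd1, ?_⟩
  have hd0 : (0 : ℝ) < d := by exact_mod_cast hd1
  rw [← exp_log (pow_pos two_pos d), log_pow, exp_lt_exp]
  simp only [Function.comp_apply, id, norm_eq_abs, abs_of_pos hd0] at hd
  nlinarith [le_abs_self (A * (1 + log d) ^ 2), log_pos one_lt_two]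

variable {γ lam : ℕ → ℝ}

lemma ExpSPT.expPT (h : ExpSPT γ lam) : ExpPT γ lam := by
  obtain ⟨p, hp, C, hC, hbound⟩ := h
  exact ⟨C, 0, p, hC, le_rfl, hp, fun d hd ε hε0 hε1 => by
    simpa only [rpow_zero, mul_one] using hbound d hd ε hε0 hε1⟩

lemma ExpPT.expQPT (h : ExpPT γ lam) : ExpQPT γ lam := by
  obtain ⟨C, q, p, hC, hq, hp, hbound⟩ := h
  refine ⟨q + p, add_nonneg hq hp, C, hC, fun d hd ε hε0 hε1 => (hbound d hd ε hε0 hε1).trans ?_⟩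
  apply ENNReal.ofReal_le_ofReal
  have hd : (1 : ℝ) ≤ d := by exact_mod_cast hd
  have hlogd : 0 ≤ log d := log_nonneg hd
  have hlogε : 0 ≤ log ε⁻¹ := log_nonneg (one_le_inv_iff₀.mpr ⟨hε0, hε1⟩)
  have hlogL : 0 ≤ log (1 + log ε⁻¹) := log_nonneg (by linarith)
  rw [mul_assoc, rpow_def_of_pos (by linarith), rpow_def_of_pos (by linarith), ← exp_add]
  gcongr
  nlinarith [mul_nonneg (add_nonneg hq hp) (mul_nonneg hlogd hlogL)]

lemma not_expQPT_of_two_pow_le_infoN (ε : ℕ → ℝ) (K : ℝ) (hK : 1 ≤ K)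
    (hε0 : ∀ d, 1 ≤ d → 0 < ε d) (hε1 : ∀ d, 1 ≤ d → ε d ≤ 1)
    (hεK : ∀ d, 1 ≤ d → 1 + log (ε d)⁻¹ ≤ K * d)
    (hinfo : ∀ d, 1 ≤ d → ((2 ^ d : ℕ) : ℕ∞) ≤ infoN γ lam (ε d) d) :
    ¬ ExpQPT γ lam := by
  rintro ⟨t, ht, C, -, hbound⟩
  set C' := max C 1
  obtain ⟨d, hd1, hlt⟩ :=
    exists_exp_mul_one_add_log_sq_lt_two_pow (log C' + t * (1 + log K))
  have hd : (1 : ℝ) ≤ d := by exact_mod_cast hd1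
  have hlogd : 0 ≤ log d := log_nonneg hd
  have hlogK : 0 ≤ log K := log_nonneg hK
  have hlogC' : 0 ≤ log C' := log_nonneg (le_max_right _ _)
  have hL : 1 ≤ 1 + log (ε d)⁻¹ :=
    le_add_of_nonneg_right (log_nonneg (one_le_inv_iff₀.mpr ⟨hε0 d hd1, hε1 d hd1⟩))
  have hlogL : log (1 + log (ε d)⁻¹) ≤ log K + log d := by
    rw [← log_mul (by linarith) (by linarith)]
    exact log_le_log (by linarith) (hεK d hd1)
  have hpow : (2 : ℝ) ^ d ≤ C * exp (t * (1 + log d) * (1 + log (1 + log (ε d)⁻¹))) := by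
    have h := (ENat.toENNReal_le.mpr (hinfo d hd1)).trans
      (hbound d hd1 (ε d) (hε0 d hd1) (hε1 d hd1))
    rw [ENat.toENNReal_coe, ENNReal.natCast_le_ofReal (by positivity)] at h
    exact_mod_cast h
  have hexp : C * exp (t * (1 + log d) * (1 + log (1 + log (ε d)⁻¹))) ≤
      exp ((log C' + t * (1 + log K)) * (1 + log d) ^ 2) := calc
    _ ≤ C' * exp (t * (1 + log K) * (1 + log d) ^ 2) := by
      have hL' : 1 + log (1 + log (ε d)⁻¹) ≤ (1 + log K) * (1 + log d) := by
        nlinarith [mul_nonneg hlogK hlogd]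
      gcongr ?_ * exp ?_
      · exact le_max_left _ _
      · calc t * (1 + log d) * (1 + log (1 + log (ε d)⁻¹))
            ≤ t * (1 + log d) * ((1 + log K) * (1 + log d)) := by gcongr
          _ = t * (1 + log K) * (1 + log d) ^ 2 := by ring
    _ = exp (log C' + t * (1 + log K) * (1 + log d) ^ 2) := by
      rw [exp_add, exp_log (zero_lt_one.trans_le (le_max_right C 1))]
    _ ≤ _ := by
      gcongr
      nlinarith [mul_nonneg hlogC' (mul_nonneg hlogd hlogd), mul_nonneg hlogC' hlogd]
  linarith

lemma two_pow_le_infoN {a ε : ℝ} {d : ℕ} (ha0 : 0 ≤ a) (ha1 : a ≤ 1)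
    (hγ : ∀ k, 1 ≤ k → a ≤ γ k * lam 2) (hε : ε ^ 2 < a ^ d) :
    ((2 ^ d : ℕ) : ℕ∞) ≤ infoN γ lam ε d := by
  set tuple : (Fin d → Bool) → (Fin d → ℕ) := fun b i => if b i then 2 else 1
  have htuple_inj : tuple.Injective := fun b₁ b₂ h => funext fun i => by
    have hi := congrFun h i
    cases hb₁ : b₁ i <;> cases hb₂ : b₂ i <;> simp [tuple, hb₁, hb₂] at hi ⊢
  have hfactor : ∀ b i, a ≤ lamKJ γ lam (i.1 + 1) (tuple b i) := fun b i => by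
    by_cases hb : b i <;> simp [tuple, lamKJ, hb, ha1, hγ _ (Nat.le_add_left 1 i.1)]
  have hsub : range tuple ⊆
      {n : Fin d → ℕ | (∀ i, 1 ≤ n i) ∧ ε ^ 2 < ∏ i, lamKJ γ lam (i.1 + 1) (n i)} := by
    rintro _ ⟨b, rfl⟩
    refine ⟨fun i => by by_cases hb : b i <;> simp [tuple, hb], hε.trans_le ?_⟩
    calc a ^ d = ∏ _i : Fin d, a := by simp
      _ ≤ _ := Finset.prod_le_prod (fun _ _ => ha0) (fun i _ => hfactor b i)
  calc ((2 ^ d : ℕ) : ℕ∞) = (univ : Set (Fin d → Bool)).encard := by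
        simp [encard_univ, ENat.card_eq_coe_fintype_card]
    _ = (range tuple).encard := by rw [← image_univ, htuple_inj.injOn.encard_image]
    _ ≤ _ := encard_le_encard hsub

section HalfRpow

variable {a : ℝ} (d : ℕ)

lemma sq_half_mul_rpow_half (ha0 : 0 < a) : ((1 / 2) * a ^ ((d : ℝ) / 2)) ^ 2 = a ^ d / 4 := by
  rw [mul_pow, ← rpow_natCast (a ^ _), ← rpow_mul ha0.le]
  norm_num [div_mul_cancel₀]
  ring

lemma log_inv_half_mul_rpow_half (ha0 : 0 < a) :
    log ((1 / 2) * a ^ ((d : ℝ) / 2))⁻¹ = log 2 - d / 2 * log a := by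
  rw [mul_inv, one_div, inv_inv, log_mul two_ne_zero (by positivity), log_inv, log_rpow ha0]
  ring

end HalfRpow

theorem stmt14_general (γ lam : ℕ → ℝ)
    (hlam_anti : AntitoneOn lam (Set.Ici 1)) (hlam1 : lam 1 = 1) (hlam2 : 0 < lam 2)
    (hγ_le : ∀ j, 1 ≤ j → γ j ≤ 1)
    (γstar : ℝ) (hγstar : 0 < γstar) (hγge : ∀ j, 1 ≤ j → γstar ≤ γ j) :
    (∀ d : ℕ, 1 ≤ d →
      (0 < (1 / 2) * (γstar * lam 2) ^ ((d : ℝ) / 2) ∧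
        (1 / 2) * (γstar * lam 2) ^ ((d : ℝ) / 2) < 1) ∧
      ((2 ^ d : ℕ) : ℕ∞) ≤ infoN γ lam ((1 / 2) * (γstar * lam 2) ^ ((d : ℝ) / 2)) d) ∧
    ¬ ExpSPT γ lam ∧ ¬ ExpPT γ lam ∧ ¬ ExpQPT γ lam := by
  set a := γstar * lam 2
  have hlam2_le : lam 2 ≤ 1 :=
    hlam1 ▸ hlam_anti (mem_Ici.mpr le_rfl) (mem_Ici.mpr one_le_two) one_le_two
  have ha0 : 0 < a := mul_pos hγstar hlam2
  have ha1 : a ≤ 1 := mul_le_one₀ ((hγge 1 le_rfl).trans (hγ_le 1 le_rfl)) hlam2.le hlam2_le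
  have hε_mem : ∀ d : ℕ, 0 < (1 / 2) * a ^ ((d : ℝ) / 2) ∧ (1 / 2) * a ^ ((d : ℝ) / 2) < 1 :=
    fun d => ⟨by positivity,
      by nlinarith [rpow_le_one ha0.le ha1 (by positivity : (0 : ℝ) ≤ d / 2)]⟩
  have hinfo : ∀ d : ℕ, 1 ≤ d → ((2 ^ d : ℕ) : ℕ∞) ≤ infoN γ lam ((1 / 2) * a ^ ((d : ℝ) / 2)) d :=
    fun d _ => two_pow_le_infoN ha0.le ha1
      (fun k hk => mul_le_mul_of_nonneg_right (hγge k hk) hlam2.le)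
      (by rw [sq_half_mul_rpow_half d ha0]; linarith [pow_pos ha0 d])
  have hlog_a : log a ≤ 0 := log_nonpos ha0.le ha1
  have hQPT : ¬ ExpQPT γ lam :=
    not_expQPT_of_two_pow_le_infoN _ (1 + log 2 - log a / 2) (by linarith [log_nonneg one_le_two])
      (fun d _ => (hε_mem d).1) (fun d _ => (hε_mem d).2.le)
      (fun d hd => by
        have hd : (1 : ℝ) ≤ d := by exact_mod_cast hd
        rw [log_inv_half_mul_rpow_half d ha0]
        nlinarith [log_nonneg one_le_two])
      hinfo
  exact ⟨fun d hd => ⟨hε_mem d, hinfo d hd⟩, fun h => hQPT h.expPT.expQPT,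
    fun h => hQPT h.expQPT, hQPT⟩

/-- if γ_j ≥ γ* > 0 for all j, then for every d ≥ 1, with
ε_d = (1/2)(γ*·λ_2)^(d/2) ∈ (0,1), one has n(ε_d,d) ≥ 2^d; consequently none of
EXP-SPT, EXP-PT, EXP-QPT holds. -/
theorem stmt14 (γ lam : ℕ → ℝ)
    (hlam_anti : AntitoneOn lam (Set.Ici 1)) (hlam1 : lam 1 = 1) (hlam2 : 0 < lam 2)
    (hlam_nonneg : ∀ j, 1 ≤ j → 0 ≤ lam j)
    (hγ_anti : AntitoneOn γ (Set.Ici 1))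
    (hγ_pos : ∀ j, 1 ≤ j → 0 < γ j) (hγ_le : ∀ j, 1 ≤ j → γ j ≤ 1)
    (γstar : ℝ) (hγstar : 0 < γstar) (hγge : ∀ j, 1 ≤ j → γstar ≤ γ j) :
    (∀ d : ℕ, 1 ≤ d →
      (0 < (1 / 2) * (γstar * lam 2) ^ ((d : ℝ) / 2) ∧
        (1 / 2) * (γstar * lam 2) ^ ((d : ℝ) / 2) < 1) ∧
      ((2 ^ d : ℕ) : ℕ∞) ≤ infoN γ lam ((1 / 2) * (γstar * lam 2) ^ ((d : ℝ) / 2)) d) ∧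
    ¬ ExpSPT γ lam ∧ ¬ ExpPT γ lam ∧ ¬ ExpQPT γ lam :=
  stmt14_general γ lam hlam_anti hlam1 hlam2 hγ_le γstar hγstar hγge
end
end

section
/- Suppose lim_{j→∞} γ_j = 0 and there exist C > 0 and β > 1 such that λ_j ≤ C·exp(−(log j)^β) for all j ≥ 1. Then EXP-WT holds. -/
open Filter Real Set Topology
open scoped ENNReal NNReal

noncomputable section

/-! Rankin's trick: for every `θ > 0`,
`n(ε,d) · ε^{2θ} ≤ ∑_{n ∈ A_{ε,d}} ∏_k λ_{k,n_k}^θ ≤ ∏_{k ≤ d} (1 + γ_k^θ ∑_{j ≥ 2} λ_j^θ)`.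
The decay `λ_j ≤ C exp(-(log j)^β)` with `β > 1` beats every power of `j`, so `∑_j λ_j^θ`
is finite for *every* `θ > 0`; hence `log n(ε,d) ≤ 2θ log ε⁻¹ + F_θ ∑_{k ≤ d} γ_k^θ`, and
`γ_k → 0` makes the last sum `o(d)`. Letting `θ → 0` gives EXP-WT. -/

open Finset

theorem summable_exp_neg_mul_log_rpow {c β : ℝ} (hc : 0 < c) (hβ : 1 < β) :
    Summable fun j : ℕ => exp (-(c * log j ^ β)) := by
  refine Summable.of_norm_bounded_eventually_nat
    (summable_nat_rpow.mpr (by norm_num : (-2 : ℝ) < -1)) ?_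
  have hlog : Tendsto (fun j : ℕ => log j) atTop atTop :=
    tendsto_log_atTop.comp tendsto_natCast_atTop_atTop
  filter_upwards [hlog.eventually_gt_atTop 0,
    ((tendsto_rpow_atTop (sub_pos.mpr hβ)).comp hlog).eventually_ge_atTop (2 / c)]
    with j hlog0 hpow
  have hj : (0 : ℝ) < j := by
    by_contra! h
    simp [le_antisymm h j.cast_nonneg] at hlog0
  have hdecay : 2 * log j ≤ c * log j ^ β :=
    calc 2 * log j = c * (2 / c) * log j := by field_simp
      _ ≤ c * log j ^ (β - 1) * log j := by gcongr; exact hpow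
      _ = c * log j ^ β := by rw [rpow_sub_one hlog0.ne', mul_assoc, div_mul_cancel₀ _ hlog0.ne']
  rw [norm_of_nonneg (exp_pos _).le, rpow_def_of_pos hj]
  exact exp_le_exp.mpr (by linarith)

theorem exists_summable_rpow_majorant {lam : ℕ → ℝ} {C β θ : ℝ} (hC : 0 ≤ C) (hβ : 1 < β)
    (hθ : 0 < θ) (hlam : ∀ j, 1 ≤ j → 0 ≤ lam j)
    (hbd : ∀ j : ℕ, 1 ≤ j → lam j ≤ C * exp (-log j ^ β)) :
    ∃ g : ℕ → ℝ, Summable g ∧ (∀ j, 0 ≤ g j) ∧ ∀ j, 1 ≤ j → lam j ^ θ ≤ g j := by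
  refine ⟨fun j => C ^ θ * exp (-(θ * log j ^ β)),
    (summable_exp_neg_mul_log_rpow hθ hβ).mul_left _, fun j => by positivity, fun j hj => ?_⟩
  calc lam j ^ θ ≤ (C * exp (-log j ^ β)) ^ θ := rpow_le_rpow (hlam j hj) (hbd j hj) hθ.le
    _ = C ^ θ * exp (-(θ * log j ^ β)) := by
      rw [mul_rpow hC (exp_pos _).le, ← exp_mul]
      ring_nf

theorem Set.exists_encard_eq_of_forall_finset_card_le {α : Type*} {S : Set α} {B : ℝ}
    (h : ∀ T : Finset α, ↑T ⊆ S → (#T : ℝ) ≤ B) : ∃ N : ℕ, S.encard = N ∧ (N : ℝ) ≤ B := by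
  have hS : S.Finite := by
    by_contra hinf
    obtain ⟨T, hTS, hT⟩ := Set.Infinite.exists_subset_card_eq hinf (⌊B⌋₊ + 1)
    have hTB := h T hTS
    rw [hT, Nat.cast_add_one] at hTB
    linarith [Nat.lt_floor_add_one B]
  exact ⟨hS.toFinset.card, hS.encard_eq_coe_toFinset_card, h _ (by simp)⟩

theorem card_mul_rpow_le_prod_sum {ι κ : Type*} [Fintype ι] (f : ι → κ → ℝ) (s : Finset κ)
    (S : Finset (ι → κ)) {a θ : ℝ} (ha : 0 ≤ a) (hθ : 0 ≤ θ) (hf : ∀ i, ∀ j ∈ s, 0 ≤ f i j)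
    (hS : ∀ n ∈ S, (∀ i, n i ∈ s) ∧ a < ∏ i, f i (n i)) :
    #S * a ^ θ ≤ ∏ i, ∑ j ∈ s, f i j ^ θ := by
  classical
  rw [prod_univ_sum]
  calc (#S : ℝ) * a ^ θ = ∑ _n ∈ S, a ^ θ := by rw [sum_const, nsmul_eq_mul]
    _ ≤ ∑ n ∈ S, ∏ i, f i (n i) ^ θ := sum_le_sum fun n hn => by
      rw [finsetProd_rpow _ _ fun i _ => hf i _ ((hS n hn).1 i)]
      exact rpow_le_rpow ha (hS n hn).2.le hθ
    _ ≤ ∑ n ∈ Fintype.piFinset fun _ => s, ∏ i, f i (n i) ^ θ :=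
      sum_le_sum_of_subset_of_nonneg (fun n hn => Fintype.mem_piFinset.mpr (hS n hn).1)
        fun n hn _ => prod_nonneg fun i _ => rpow_nonneg (hf i _ (Fintype.mem_piFinset.mp hn i)) θ

theorem lamKJ_nonneg {γ lam : ℕ → ℝ} {k j : ℕ} (hγ : 0 ≤ γ k) (hlam : 0 ≤ lam j) :
    0 ≤ lamKJ γ lam k j := by
  unfold lamKJ
  split_ifs
  exacts [zero_le_one, mul_nonneg hγ hlam]

theorem sum_lamKJ_rpow_le {γ lam g : ℕ → ℝ} {k : ℕ} {θ : ℝ} {s : Finset ℕ} (hγ : 0 ≤ γ k)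
    (hlam : ∀ j ∈ s, 0 ≤ lam j) (hg : Summable g) (hg0 : ∀ j, 0 ≤ g j)
    (hlamg : ∀ j ∈ s, lam j ^ θ ≤ g j) :
    ∑ j ∈ s, lamKJ γ lam k j ^ θ ≤ 1 + (∑' j, g j) * γ k ^ θ := by
  have hγθ : 0 ≤ γ k ^ θ := rpow_nonneg hγ θ
  calc ∑ j ∈ s, lamKJ γ lam k j ^ θ ≤ ∑ j ∈ insert 1 (s.erase 1), lamKJ γ lam k j ^ θ := by
        refine sum_le_sum_of_subset_of_nonneg (insert_erase_subset 1 s) fun j hj hjs => ?_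
        rcases mem_insert.mp hj with rfl | hj
        · simp [lamKJ]
        · exact absurd (mem_of_mem_erase hj) hjs
    _ = 1 + (∑ j ∈ s.erase 1, lam j ^ θ) * γ k ^ θ := by
        rw [sum_insert (notMem_erase 1 s), sum_mul]
        congr 1
        · simp [lamKJ]
        · refine sum_congr rfl fun j hj => ?_
          rw [lamKJ, if_neg (ne_of_mem_erase hj), mul_rpow hγ (hlam j (mem_of_mem_erase hj)),
            mul_comm]
    _ ≤ 1 + (∑ j ∈ s.erase 1, g j) * γ k ^ θ := by
        gcongr with j hj
        exact hlamg j (mem_of_mem_erase hj)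
    _ ≤ 1 + (∑' j, g j) * γ k ^ θ := by
        gcongr
        exact hg.sum_le_tsum _ fun j _ => hg0 j

theorem infoN_mul_rpow_le {γ lam g : ℕ → ℝ} {θ ε : ℝ} (d : ℕ) (hθ : 0 ≤ θ) (hε : 0 < ε)
    (hγ : ∀ k, 1 ≤ k → 0 ≤ γ k) (hlam : ∀ j, 1 ≤ j → 0 ≤ lam j) (hg : Summable g)
    (hg0 : ∀ j, 0 ≤ g j) (hlamg : ∀ j, 1 ≤ j → lam j ^ θ ≤ g j) :
    ∃ N : ℕ, infoN γ lam ε d = N ∧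
      (N : ℝ) * (ε ^ 2) ^ θ ≤ ∏ i : Fin d, (1 + (∑' j, g j) * γ (i + 1) ^ θ) := by
  have hεθ : 0 < (ε ^ 2) ^ θ := by positivity
  obtain ⟨N, hN, hNB⟩ := Set.exists_encard_eq_of_forall_finset_card_le
    (S := {n : Fin d → ℕ | (∀ i, 1 ≤ n i) ∧ ε ^ 2 < ∏ i, lamKJ γ lam (i.1 + 1) (n i)})
    (B := (∏ i : Fin d, (1 + (∑' j, g j) * γ (i + 1) ^ θ)) / (ε ^ 2) ^ θ) fun T hT => by
      rw [le_div_iff₀ hεθ]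
      set s := T.biUnion fun n => univ.image n
      have hs : ∀ j ∈ s, 1 ≤ j := fun j hj => by
        obtain ⟨n, hn, hj⟩ := mem_biUnion.mp hj
        obtain ⟨i, -, rfl⟩ := mem_image.mp hj
        exact (hT hn).1 i
      calc (#T : ℝ) * (ε ^ 2) ^ θ ≤ ∏ i : Fin d, ∑ j ∈ s, lamKJ γ lam (i + 1) j ^ θ :=
            card_mul_rpow_le_prod_sum _ s T (sq_nonneg ε) hθ
              (fun i j hj => lamKJ_nonneg (hγ _ (by omega)) (hlam j (hs j hj)))
              fun n hn => ⟨fun i => mem_biUnion.mpr ⟨n, hn, mem_image_of_mem n (mem_univ i)⟩,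
                (hT hn).2⟩
        _ ≤ _ := prod_le_prod
            (fun i _ => sum_nonneg fun j hj =>
              rpow_nonneg (lamKJ_nonneg (hγ _ (by omega)) (hlam j (hs j hj))) θ)
            fun i _ => sum_lamKJ_rpow_le (hγ _ (by omega)) (fun j hj => hlam j (hs j hj)) hg hg0
              fun j hj => hlamg j (hs j hj)
  exact ⟨N, hN, (le_div_iff₀ hεθ).mp hNB⟩

theorem log_max_one_le_of_mul_rpow_le {N θ ε B : ℝ} (hθ : 0 ≤ θ) (hε : 0 < ε) (hε1 : ε ≤ 1)
    (hB : 0 ≤ B) (hN : N * (ε ^ 2) ^ θ ≤ exp B) : log (max 1 N) ≤ B + 2 * θ * log ε⁻¹ := by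
  have hL : 0 ≤ log ε⁻¹ := log_nonneg (one_le_inv₀ hε |>.mpr hε1)
  have hεθ : (ε ^ 2) ^ θ = exp (-(2 * θ * log ε⁻¹)) := by
    rw [rpow_def_of_pos (by positivity), log_pow, log_inv]
    push_cast
    ring_nf
  have hN' : N ≤ exp (B + 2 * θ * log ε⁻¹) := by
    rwa [hεθ, ← le_div_iff₀ (exp_pos _), ← exp_sub, sub_neg_eq_add] at hN
  rw [log_le_iff_le_exp (by positivity)]
  exact max_le (one_le_exp (add_nonneg hB (mul_nonneg (by positivity) hL))) hN'

theorem exists_sum_range_le_add_mul_of_tendsto_zero {w : ℕ → ℝ} (hw0 : ∀ i, 0 ≤ w i)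
    (hw : Tendsto w atTop (𝓝 0)) {η : ℝ} (hη : 0 < η) :
    ∃ K : ℝ, ∀ d : ℕ, ∑ i ∈ range d, w i ≤ K + η * d := by
  obtain ⟨k, hk⟩ := eventually_atTop.mp (hw.eventually (ge_mem_nhds hη))
  refine ⟨∑ i ∈ range k, w i, fun d => ?_⟩
  calc ∑ i ∈ range d, w i ≤ ∑ i ∈ range (max k d), w i :=
        sum_le_sum_of_subset_of_nonneg (range_subset_range.mpr (le_max_right k d))
          fun i _ _ => hw0 i
    _ = ∑ i ∈ range k, w i + ∑ i ∈ Ico k (max k d), w i :=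
        (sum_range_add_sum_Ico _ (le_max_left k d)).symm
    _ ≤ ∑ i ∈ range k, w i + η * d := by
        gcongr
        calc ∑ i ∈ Ico k (max k d), w i ≤ #(Ico k (max k d)) • η :=
              sum_le_card_nsmul _ _ _ fun i hi => hk i (mem_Ico.mp hi).1
          _ ≤ η * d := by
              rw [nsmul_eq_mul, mul_comm, Nat.card_Ico]
              gcongr
              exact_mod_cast (by omega : max k d - k ≤ d)

theorem expSTWT_one_one_of_forall_log_le {γ lam : ℕ → ℝ}
    (h : ∀ η > 0, ∃ K : ℝ, ∀ d : ℕ, 1 ≤ d → ∀ ε : ℝ, 0 < ε → ε ≤ 1 →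
      ∃ N : ℕ, infoN γ lam ε d = N ∧ log (max 1 (N : ℝ)) ≤ K + η * (d + log ε⁻¹)) :
    ExpSTWT γ lam 1 1 := by
  intro δ hδ
  obtain ⟨K, hK⟩ := h (δ / 2) (half_pos hδ)
  refine ⟨2 * K / δ + exp (2 * K / δ), fun d hd ε hε hε1 hT => ?_⟩
  obtain ⟨N, hN, hlog⟩ := hK d hd ε hε hε1
  refine ⟨N, hN, ?_⟩
  have hL : 0 ≤ log ε⁻¹ := log_nonneg (one_le_inv₀ hε |>.mpr hε1)
  have hX : 2 * K / δ ≤ d + log ε⁻¹ := by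
    by_cases hdX : 2 * K / δ ≤ d
    · linarith
    · have hexp : exp (2 * K / δ) ≤ ε⁻¹ := by linarith
      linarith [(le_log_iff_exp_le (by positivity)).mpr hexp, d.cast_nonneg (α := ℝ)]
  rw [div_le_iff₀ hδ] at hX
  rw [rpow_one, rpow_one, div_lt_iff₀ (by positivity)]
  linarith

theorem stmt15_general (γ lam : ℕ → ℝ)
    (hlam_nonneg : ∀ j, 1 ≤ j → 0 ≤ lam j)
    (hγ_pos : ∀ j, 1 ≤ j → 0 < γ j)
    (hγ0 : Tendsto γ atTop (nhds 0)) (C β : ℝ) (hC : 0 < C) (hβ : 1 < β)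
    (hbd : ∀ j : ℕ, 1 ≤ j → lam j ≤ C * Real.exp (-(Real.log j) ^ β)) :
    ExpSTWT γ lam 1 1 := by
  refine expSTWT_one_one_of_forall_log_le fun η hη => ?_
  set θ := η / 2
  have hθ : 0 < θ := half_pos hη
  obtain ⟨g, hg, hg0, hlamg⟩ := exists_summable_rpow_majorant hC.le hβ hθ hlam_nonneg hbd
  set F := ∑' j, g j
  set w : ℕ → ℝ := fun i => F * γ (i + 1) ^ θ
  have hw0 : ∀ i, 0 ≤ w i := fun i =>
    mul_nonneg (tsum_nonneg hg0) (rpow_nonneg (hγ_pos _ (by omega)).le θ)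
  have hw : Tendsto w atTop (𝓝 0) := by
    simpa [w, zero_rpow hθ.ne'] using
      (((tendsto_add_atTop_iff_nat 1).mpr hγ0).rpow_const (Or.inr hθ.le)).const_mul F
  obtain ⟨K, hK⟩ := exists_sum_range_le_add_mul_of_tendsto_zero hw0 hw hη
  refine ⟨K, fun d _ ε hε hε1 => ?_⟩
  obtain ⟨N, hN, hNprod⟩ := infoN_mul_rpow_le d hθ.le hε (fun j hj => (hγ_pos j hj).le)
    hlam_nonneg hg hg0 hlamg
  have hNexp : (N : ℝ) * (ε ^ 2) ^ θ ≤ exp (∑ i ∈ range d, w i) :=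
    hNprod.trans ((Fin.prod_univ_eq_prod_range (fun i => 1 + w i) d).trans_le
      (prod_one_add_le_exp_sum _ hw0))
  refine ⟨N, hN, ?_⟩
  calc log (max 1 (N : ℝ)) ≤ ∑ i ∈ range d, w i + 2 * θ * log ε⁻¹ :=
        log_max_one_le_of_mul_rpow_le hθ.le hε hε1 (sum_nonneg fun i _ => hw0 i) hNexp
    _ ≤ K + η * (d + log ε⁻¹) := by
        have h2θ : 2 * θ * log ε⁻¹ = η * log ε⁻¹ := by ring
        linarith [hK d]

/-- if γ_j → 0 and λ_j ≤ C·exp(−(log j)^β) for some C > 0, β > 1 and all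
j ≥ 1, then EXP-WT holds. -/
theorem stmt15 (γ lam : ℕ → ℝ)
    (hlam_anti : AntitoneOn lam (Set.Ici 1)) (hlam1 : lam 1 = 1) (hlam2 : 0 < lam 2)
    (hlam_nonneg : ∀ j, 1 ≤ j → 0 ≤ lam j)
    (hγ_anti : AntitoneOn γ (Set.Ici 1))
    (hγ_pos : ∀ j, 1 ≤ j → 0 < γ j) (hγ_le : ∀ j, 1 ≤ j → γ j ≤ 1)
    (hγ0 : Tendsto γ atTop (nhds 0)) (C β : ℝ) (hC : 0 < C) (hβ : 1 < β)
    (hbd : ∀ j : ℕ, 1 ≤ j → lam j ≤ C * Real.exp (-(Real.log j) ^ β)) :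
    ExpSTWT γ lam 1 1 :=
  stmt15_general γ lam hlam_nonneg hγ_pos hγ0 C β hC hβ hbd
end
end

section
/- Suppose γ_{j*} = 0 for some integer j* ≥ 2. Then n(ε,d) ≤ n(ε, j*−1) for all ε ∈ (0,1) and all d ∈ ℕ. -/
/-!
`n(ε,d)` is non-decreasing in `d`: appending a coordinate `1` contributes the factor
`λ_{d+1,1} = 1`. Conversely, if `γ_{d+1} = 0` then any coordinate `n_{d+1} ≥ 2` makes the product
vanish, so admissible `(d+1)`-tuples end in `1` and `n(ε,d+1) = n(ε,d)`. Since the weights are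
non-increasing and non-negative, `γ_k = 0` for all `k ≥ j*`, so `n(ε,·)` is constant from `j* − 1` on.
-/

open Filter Real Set Topology
open scoped ENNReal NNReal

noncomputable section

/-- The set `A_{ε,d}` counted by `infoN`. -/
def admissibleTuples (γ lam : ℕ → ℝ) (ε : ℝ) (d : ℕ) : Set (Fin d → ℕ) :=
  {n | (∀ i, 1 ≤ n i) ∧ ε ^ 2 < ∏ i, lamKJ γ lam (i.1 + 1) (n i)}

theorem infoN_le_infoN_succ (γ lam : ℕ → ℝ) (ε : ℝ) (d : ℕ) :
    infoN γ lam ε d ≤ infoN γ lam ε (d + 1) := by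
  refine Set.encard_le_encard_of_injOn (f := fun n => Fin.snoc n 1) ?_ ?_
  · rintro n ⟨hn_pos, hn_prod⟩
    refine ⟨Fin.lastCases (by simp) (by simpa using hn_pos), ?_⟩
    simpa [Fin.prod_univ_castSucc, lamKJ] using hn_prod
  · intro n _ m _ h
    exact (Fin.snoc_injective2 h).1

theorem infoN_mono (γ lam : ℕ → ℝ) (ε : ℝ) : Monotone (infoN γ lam ε) :=
  monotone_nat_of_le_succ (infoN_le_infoN_succ γ lam ε)

theorem last_eq_one_of_mem_admissibleTuples {γ : ℕ → ℝ} {lam : ℕ → ℝ} {ε : ℝ} {d : ℕ}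
    (hγ : γ (d + 1) = 0) {n : Fin (d + 1) → ℕ} (hn : n ∈ admissibleTuples γ lam ε (d + 1)) :
    n (Fin.last d) = 1 := by
  by_contra hne
  have hzero : lamKJ γ lam (d + 1) (n (Fin.last d)) = 0 := by simp [lamKJ, hne, hγ]
  have hn_prod := hn.2
  rw [Fin.prod_univ_castSucc, Fin.val_last, hzero, mul_zero] at hn_prod
  exact (sq_nonneg ε).not_gt hn_prod

theorem infoN_succ_le_infoN {γ : ℕ → ℝ} (lam : ℕ → ℝ) (ε : ℝ) {d : ℕ} (hγ : γ (d + 1) = 0) :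
    infoN γ lam ε (d + 1) ≤ infoN γ lam ε d := by
  refine Set.encard_le_encard_of_injOn (f := Fin.init) (fun n hn => ?_) (fun n hn m hm h => ?_)
  · have hlast := last_eq_one_of_mem_admissibleTuples hγ hn
    obtain ⟨hn_pos, hn_prod⟩ := hn
    refine ⟨fun i => hn_pos _, ?_⟩
    rw [Fin.prod_univ_castSucc, Fin.val_last, hlast, lamKJ, if_pos rfl, mul_one] at hn_prod
    exact hn_prod
  · rw [← Fin.snoc_init_self n, ← Fin.snoc_init_self m, h,
      last_eq_one_of_mem_admissibleTuples hγ hn, last_eq_one_of_mem_admissibleTuples hγ hm]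

theorem infoN_le_of_forall_gt_eq_zero {γ : ℕ → ℝ} (lam : ℕ → ℝ) (ε : ℝ) {e : ℕ}
    (hγ : ∀ k, e < k → γ k = 0) {d : ℕ} (hed : e ≤ d) :
    infoN γ lam ε d ≤ infoN γ lam ε e := by
  induction d, hed using Nat.le_induction with
  | base => exact le_rfl
  | succ d hed ih => exact (infoN_succ_le_infoN lam ε (hγ _ (by omega))).trans ih

theorem AntitoneOn.eq_zero_of_le {γ : ℕ → ℝ} (hγ_anti : AntitoneOn γ (Set.Ici 1))
    (hγ_nonneg : ∀ j, 1 ≤ j → 0 ≤ γ j) {j k : ℕ} (hj : 1 ≤ j) (hjk : j ≤ k) (hγj : γ j = 0) :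
    γ k = 0 :=
  le_antisymm (hγj ▸ hγ_anti hj (hj.trans hjk) hjk) (hγ_nonneg k (hj.trans hjk))

theorem stmt16_general (γ lam : ℕ → ℝ)
    (hγ_anti : AntitoneOn γ (Set.Ici 1))
    (hγ_nonneg : ∀ j, 1 ≤ j → 0 ≤ γ j)
    (jstar : ℕ) (hjstar : 2 ≤ jstar) (hγzero : γ jstar = 0) :
    ∀ ε : ℝ, 0 < ε → ε < 1 → ∀ d : ℕ, 1 ≤ d →
      infoN γ lam ε d ≤ infoN γ lam ε (jstar - 1) := by
  intro ε _ _ d _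
  rcases le_total d (jstar - 1) with hd | hd
  · exact infoN_mono γ lam ε hd
  · refine infoN_le_of_forall_gt_eq_zero lam ε (fun k hk => ?_) hd
    exact hγ_anti.eq_zero_of_le hγ_nonneg (by omega) (by omega) hγzero

/-- if γ_{j*} = 0 for some j* ≥ 2 (weights only assumed non-increasing with
0 ≤ γ_j ≤ 1), then n(ε,d) ≤ n(ε, j*−1) for all ε ∈ (0,1) and all d. -/
theorem stmt16 (γ lam : ℕ → ℝ)
    (hlam_anti : AntitoneOn lam (Set.Ici 1)) (hlam1 : lam 1 = 1) (hlam2 : 0 < lam 2)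
    (hlam_nonneg : ∀ j, 1 ≤ j → 0 ≤ lam j)
    (hγ_anti : AntitoneOn γ (Set.Ici 1))
    (hγ_nonneg : ∀ j, 1 ≤ j → 0 ≤ γ j) (hγ_le : ∀ j, 1 ≤ j → γ j ≤ 1)
    (jstar : ℕ) (hjstar : 2 ≤ jstar) (hγzero : γ jstar = 0) :
    ∀ ε : ℝ, 0 < ε → ε < 1 → ∀ d : ℕ, 1 ≤ d →
      infoN γ lam ε d ≤ infoN γ lam ε (jstar - 1) :=
  stmt16_general γ lam hγ_anti hγ_nonneg jstar hjstar hγzero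
end
end

section
/- Suppose there exists α > 0 such that λ_j ≥ exp(−α·j) for all j ≥ 1. Then EXP-SPT does not hold, for any choice of the weight sequence {γ_j}. -/
open Filter Real Set Topology
open scoped ENNReal NNReal

noncomputable section

/-!
Fix `d > p` and `m ≥ 1`. Every factor `λ_{k,j}` with `k ≤ d` and `j ≤ m` is at least
`c = γ_d e^{-αm}`, so at `ε = c^d` all `m^d` tuples in `{1,…,m}^d` are counted and
`n(ε,d) ≥ m^d`. On the other hand `log ε⁻¹ = d(αm - log γ_d)` grows only linearly in `m`,
so an EXP-SPT bound would give `m^d ≤ C (K m)^p` for all `m` with `K` independent of `m`,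
impossible since `d > p`.
-/

lemma natCast_pow_le_infoN {γ lam : ℕ → ℝ} {ε c : ℝ} {d m : ℕ} (hc : 0 ≤ c)
    (hε : ε ^ 2 < c ^ d)
    (hle : ∀ k j : ℕ, 1 ≤ k → k ≤ d → 1 ≤ j → j ≤ m → c ≤ lamKJ γ lam k j) :
    ((m ^ d : ℕ) : ℕ∞) ≤ infoN γ lam ε d := by
  let F : (Fin d → Fin m) → (Fin d → ℕ) := fun f i => f i + 1
  have hF : F.Injective := fun f g hfg =>
    funext fun i => Fin.ext (by simpa [F] using congrFun hfg i)
  have hrange : range F ⊆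
      {n : Fin d → ℕ | (∀ i, 1 ≤ n i) ∧ ε ^ 2 < ∏ i, lamKJ γ lam (i.1 + 1) (n i)} := by
    rintro _ ⟨f, rfl⟩
    refine ⟨fun i => by simp [F], hε.trans_le ?_⟩
    calc c ^ d = ∏ _i : Fin d, c := by simp
      _ ≤ ∏ i, lamKJ γ lam (i.1 + 1) (F f i) :=
        Finset.prod_le_prod (fun _ _ => hc) fun i _ =>
          hle _ _ (by omega) i.2 (by simp [F]) (f i).2
  calc ((m ^ d : ℕ) : ℕ∞) = (range F).encard := by
        rw [← image_univ, hF.injOn.encard_image, encard_univ]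
        simp [ENat.card_eq_coe_fintype_card]
    _ ≤ infoN γ lam ε d := encard_le_encard hrange

lemma mul_exp_neg_mem_Ioo {g α : ℝ} (hg0 : 0 < g) (hg1 : g ≤ 1) (hα : 0 < α) {m : ℕ}
    (hm : 1 ≤ m) : g * exp (-α * m) ∈ Ioo 0 1 := by
  have : exp (-α * m) < 1 := exp_lt_one_iff.2 (by nlinarith [(Nat.one_le_cast (α := ℝ)).2 hm])
  exact ⟨mul_pos hg0 (exp_pos _), by nlinarith⟩

section Weights

variable {γ lam : ℕ → ℝ} {α : ℝ}

lemma mul_exp_le_lamKJ (hα : 0 ≤ α) (hge : ∀ j : ℕ, 1 ≤ j → exp (-α * j) ≤ lam j)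
    (hγa : AntitoneOn γ (Ici 1)) (hγpos : ∀ j, 1 ≤ j → 0 < γ j) (hγ1 : ∀ j, 1 ≤ j → γ j ≤ 1)
    {k d j m : ℕ} (hk : 1 ≤ k) (hkd : k ≤ d) (hj : 1 ≤ j) (hjm : j ≤ m) :
    γ d * exp (-α * m) ≤ lamKJ γ lam k j := by
  have hexp : exp (-α * m) ≤ 1 := exp_le_one_iff.2 (by nlinarith [m.cast_nonneg (α := ℝ)])
  rcases eq_or_ne j 1 with rfl | hj1
  · simpa [lamKJ] using mul_le_one₀ (hγ1 d (hk.trans hkd)) (exp_pos _).le hexp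
  · rw [lamKJ, if_neg hj1]
    refine mul_le_mul (hγa hk (hk.trans hkd) (by exact_mod_cast hkd)) ?_ (exp_pos _).le
      (hγpos k hk).le
    exact (exp_le_exp.2 (by nlinarith [(Nat.cast_le (α := ℝ)).2 hjm])).trans (hge j hj)

lemma natCast_pow_le_infoN_mul_exp (hα : 0 < α)
    (hge : ∀ j : ℕ, 1 ≤ j → exp (-α * j) ≤ lam j)
    (hγa : AntitoneOn γ (Ici 1)) (hγpos : ∀ j, 1 ≤ j → 0 < γ j) (hγ1 : ∀ j, 1 ≤ j → γ j ≤ 1)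
    {d m : ℕ} (hd : 1 ≤ d) (hm : 1 ≤ m) :
    ((m ^ d : ℕ) : ℕ∞) ≤ infoN γ lam ((γ d * exp (-α * m)) ^ d) d := by
  obtain ⟨hc0, hc1⟩ := mul_exp_neg_mem_Ioo (hγpos d hd) (hγ1 d hd) hα hm
  have hε1 : (γ d * exp (-α * m)) ^ d < 1 := pow_lt_one₀ hc0.le hc1 (by omega)
  refine natCast_pow_le_infoN hc0.le ?_ fun k j hk hkd hj hjm =>
    mul_exp_le_lamKJ hα.le hge hγa hγpos hγ1 hk hkd hj hjm
  nlinarith [pow_pos hc0 d]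

end Weights

lemma one_add_log_inv_le {g α : ℝ} (hg0 : 0 < g) (hg1 : g ≤ 1) {d m : ℕ}
    (hm : 1 ≤ m) :
    1 + log ((g * exp (-α * m)) ^ d)⁻¹ ≤ (1 + d * α - d * log g) * m := by
  have hlog : log ((g * exp (-α * m)) ^ d)⁻¹ = d * (α * m) - d * log g := by
    rw [log_inv, log_pow, log_mul hg0.ne' (exp_pos _).ne', log_exp]
    ring
  have hm1 : (1 : ℝ) ≤ m := by exact_mod_cast hm
  have : 0 ≤ (1 - d * log g) * (m - 1) :=
    mul_nonneg (by nlinarith [log_nonpos hg0.le hg1, d.cast_nonneg (α := ℝ)]) (by linarith)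
  rw [hlog]
  nlinarith

lemma le_of_pow_le_mul_rpow {x A p : ℝ} {d : ℕ} (hx : 1 ≤ x) (hpd : p + 1 ≤ d)
    (h : x ^ d ≤ A * x ^ p) : x ≤ A := by
  have hx0 : 0 < x := one_pos.trans_le hx
  have hxp : 0 < x ^ p := rpow_pos_of_pos hx0 p
  refine le_of_mul_le_mul_right ?_ hxp
  calc x * x ^ p = x ^ (p + 1) := by rw [rpow_add hx0, rpow_one, mul_comm]
    _ ≤ x ^ (d : ℝ) := rpow_le_rpow_of_exponent_le hx hpd
    _ = x ^ d := rpow_natCast x d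
    _ ≤ A * x ^ p := h

lemma natCast_le_of_le_of_toENNReal_le_ofReal {n : ℕ∞} {N : ℕ} {R : ℝ} (hN : N ≠ 0)
    (h₁ : (N : ℕ∞) ≤ n) (h₂ : (n : ℝ≥0∞) ≤ ENNReal.ofReal R) : (N : ℝ) ≤ R :=
  (ENNReal.natCast_le_ofReal hN).1 <| le_trans (by exact_mod_cast ENat.toENNReal_le.2 h₁) h₂

theorem stmt17_general (lam : ℕ → ℝ)
    (α : ℝ) (hα : 0 < α) (hge : ∀ j : ℕ, 1 ≤ j → Real.exp (-α * j) ≤ lam j) :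
    ∀ γ : ℕ → ℝ, AntitoneOn γ (Set.Ici 1) → (∀ j, 1 ≤ j → 0 < γ j) →
      (∀ j, 1 ≤ j → γ j ≤ 1) → ¬ ExpSPT γ lam := by
  rintro γ hγa hγpos hγ1 ⟨p, hp, C, hC, hbound⟩
  set d : ℕ := ⌈p⌉₊ + 1
  have hd : 1 ≤ d := by omega
  have hpd : p + 1 ≤ d := by push_cast [d]; linarith [Nat.le_ceil p]
  set K : ℝ := 1 + d * α - d * log (γ d)
  have hK : 0 ≤ K := by
    have := mul_nonpos_of_nonneg_of_nonpos d.cast_nonneg (log_nonpos (hγpos d hd).le (hγ1 d hd))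
    have := mul_nonneg d.cast_nonneg hα.le
    linarith
  have hbounded : ∀ m : ℕ, 1 ≤ m → (m : ℝ) ≤ C * K ^ p := by
    intro m hm
    set ε := (γ d * exp (-α * m)) ^ d
    obtain ⟨hc0, hc1⟩ := mul_exp_neg_mem_Ioo (hγpos d hd) (hγ1 d hd) hα hm
    have hε0 : 0 < ε := pow_pos hc0 d
    have hε1 : ε ≤ 1 := pow_le_one₀ hc0.le hc1.le
    have hlog0 : 0 ≤ 1 + log ε⁻¹ := by
      linarith [log_nonneg ((one_le_inv₀ hε0).2 hε1)]
    have hcount : ((m : ℝ) ^ d) ≤ C * (1 + log ε⁻¹) ^ p := by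
      exact_mod_cast natCast_le_of_le_of_toENNReal_le_ofReal (by positivity)
        (natCast_pow_le_infoN_mul_exp hα hge hγa hγpos hγ1 hd hm) (hbound d hd ε hε0 hε1)
    refine le_of_pow_le_mul_rpow (by exact_mod_cast hm) hpd ?_
    calc (m : ℝ) ^ d ≤ C * (1 + log ε⁻¹) ^ p := hcount
      _ ≤ C * (K * m) ^ p := by
        gcongr
        exact one_add_log_inv_le (hγpos d hd) (hγ1 d hd) hm
      _ = C * K ^ p * (m : ℝ) ^ p := by
        rw [mul_rpow hK m.cast_nonneg, mul_assoc]
  obtain ⟨m, hm⟩ := exists_nat_gt (C * K ^ p)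
  have := hbounded (m + 1) (by omega)
  push_cast at this
  linarith

/-- if λ_j ≥ exp(−α·j) for some α > 0 and all j ≥ 1, then EXP-SPT fails
for every admissible weight sequence γ. -/
theorem stmt17 (lam : ℕ → ℝ)
    (hlam_anti : AntitoneOn lam (Set.Ici 1)) (hlam1 : lam 1 = 1) (hlam2 : 0 < lam 2)
    (hlam_nonneg : ∀ j, 1 ≤ j → 0 ≤ lam j)
    (α : ℝ) (hα : 0 < α) (hge : ∀ j : ℕ, 1 ≤ j → Real.exp (-α * j) ≤ lam j) :
    ∀ γ : ℕ → ℝ, AntitoneOn γ (Set.Ici 1) → (∀ j, 1 ≤ j → 0 < γ j) →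
      (∀ j, 1 ≤ j → γ j ≤ 1) → ¬ ExpSPT γ lam :=
  stmt17_general lam α hα hge
end
end

section
/- Let α₁, α₂ > 0, and define λ_1 = 1, λ_j = exp(−exp(α₁·j)) for j ≥ 2, and γ_j = exp(−exp(exp(α₂·j))) for j ≥ 1. Then EXP-SPT holds with exponent p* = 0; that is, for every p > 0 there exists C ≥ 0 such that n(ε,d) ≤ C·(1 + log ε⁻¹)^p for all d ∈ ℕ and ε ∈ (0,1]. -/
open Filter Real Set Topology
open scoped ENNReal NNReal

noncomputable section

set_option maxHeartbeats 2000000 in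
/-- for α₁, α₂ > 0, λ_1 = 1, λ_j = exp(−exp(α₁ j)) for j ≥ 2 and
γ_j = exp(−exp(exp(α₂ j))) for j ≥ 1, EXP-SPT holds with exponent p* = 0; that is,
for every p > 0 there is C ≥ 0 with n(ε,d) ≤ C(1 + log ε⁻¹)^p for all d, ε. -/
theorem stmt18 (γ lam : ℕ → ℝ) (α₁ α₂ : ℝ) (hα₁ : 0 < α₁) (hα₂ : 0 < α₂)
    (hlam1 : lam 1 = 1)
    (hlamj : ∀ j : ℕ, 2 ≤ j → lam j = Real.exp (-Real.exp (α₁ * j)))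
    (hγj : ∀ j : ℕ, 1 ≤ j → γ j = Real.exp (-Real.exp (Real.exp (α₂ * j)))) :
    ExpSPT γ lam ∧ ∀ p : ℝ, 0 < p → ExpSPTwith γ lam p := by
  have key : ∀ p : ℝ, 0 < p → ExpSPTwith γ lam p := by
    intro p hp
    have hc₂ : 0 ≤ Real.log (1/α₁ + 2) := Real.log_nonneg (by nlinarith [one_div_pos.mpr hα₁])
    set c₂ : ℝ := Real.log (1/α₁ + 2) with hc₂def
    set A : ℝ := (16 + 4*c₂)/α₂ with hAdef
    have hA : 0 ≤ A := by positivity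
    set C : ℝ := Real.exp (A^2/(4*p) + p*Real.log 2) with hCdef
    have hC1 : 1 ≤ C := Real.one_le_exp
      (add_nonneg (by positivity) (mul_nonneg hp.le (Real.log_nonneg one_le_two)))
    refine ⟨C, by linarith, ?_⟩
    intro d hd ε hε hε1
    set x := Real.log ε⁻¹ with hxdef
    have hx : 0 ≤ x := Real.log_nonneg ((one_le_inv₀ hε).mpr hε1)
    set y := Real.log (2*x) with hydef
    set z := Real.log (max y 1) with hzdef
    set J := ⌊y/α₁⌋₊ with hJdef
    set K := ⌊z/α₂⌋₊ with hKdef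
    clear_value x y z J K
    -- Step 1: structure of admissible tuples
    have step1 : ∀ n : Fin d → ℕ,
        n ∈ {n : Fin d → ℕ | (∀ i, 1 ≤ n i) ∧ ε ^ 2 < ∏ i, lamKJ γ lam (i.1 + 1) (n i)} →
        ∀ i : Fin d, n i = 1 ∨ (2 ≤ n i ∧ n i ≤ J ∧ i.1 < K) := by
      intro n hn i
      obtain ⟨hn1, hnp⟩ := hn
      by_cases h1 : n i = 1
      · exact Or.inl h1
      right
      have h2 : 2 ≤ n i := by have := hn1 i; omega
      have hfac : ∀ j : Fin d, 0 ≤ lamKJ γ lam (j.1+1) (n j) ∧ lamKJ γ lam (j.1+1) (n j) ≤ 1 := by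
        intro j
        simp only [lamKJ]
        split_ifs with h
        · exact ⟨zero_le_one, le_rfl⟩
        · have hj2 : 2 ≤ n j := by have := hn1 j; omega
          rw [hγj _ (by omega), hlamj _ hj2]
          constructor
          · positivity
          · rw [← Real.exp_add]
            calc Real.exp _ ≤ Real.exp 0 := Real.exp_le_exp.mpr (by
                have := Real.exp_pos (Real.exp (α₂ * ((j.1+1 : ℕ) : ℝ)))
                have := Real.exp_pos (α₁ * ((n j : ℕ) : ℝ))
                linarith)
              _ = 1 := Real.exp_zero
      have hple : ∏ j, lamKJ γ lam (j.1+1) (n j) ≤ lamKJ γ lam (i.1+1) (n i) := by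
        rw [← Finset.mul_prod_erase Finset.univ _ (Finset.mem_univ i)]
        have hrest : ∏ j ∈ Finset.univ.erase i, lamKJ γ lam (j.1+1) (n j) ≤ 1 :=
          Finset.prod_le_one (fun j _ => (hfac j).1) (fun j _ => (hfac j).2)
        have hrest0 : 0 ≤ ∏ j ∈ Finset.univ.erase i, lamKJ γ lam (j.1+1) (n j) :=
          Finset.prod_nonneg (fun j _ => (hfac j).1)
        nlinarith [(hfac i).1, (hfac i).2]
      have hlt : ε^2 < lamKJ γ lam (i.1+1) (n i) := lt_of_lt_of_le hnp hple
      rw [lamKJ, if_neg h1, hγj _ (by omega), hlamj _ h2, ← Real.exp_add] at hlt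
      have hε2 : ε^2 = Real.exp (2 * Real.log ε) := by
        rw [two_mul, Real.exp_add, Real.exp_log hε, sq]
      rw [hε2, Real.exp_lt_exp] at hlt
      have hxlog : x = -Real.log ε := by rw [hxdef, Real.log_inv]
      have hsum : Real.exp (Real.exp (α₂*((i.1+1:ℕ):ℝ))) + Real.exp (α₁*((n i : ℕ):ℝ)) < 2*x := by
        linarith
      have h2x : 0 < 2*x := by
        have := Real.exp_pos (Real.exp (α₂*((i.1+1:ℕ):ℝ)))
        have := Real.exp_pos (α₁*((n i : ℕ):ℝ))
        linarith
      have hE1 : Real.exp (α₁ * ((n i : ℕ):ℝ)) < 2*x := by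
        have := Real.exp_pos (Real.exp (α₂*((i.1+1:ℕ):ℝ))); linarith
      have hjy : α₁ * ((n i : ℕ):ℝ) < y := by
        rw [hydef]; exact (Real.lt_log_iff_exp_lt h2x).mpr hE1
      have hJle : n i ≤ J := by
        rw [hJdef]
        exact Nat.le_floor ((le_div_iff₀ hα₁).mpr (by linarith [mul_comm α₁ ((n i : ℕ):ℝ)]))
      have hE2 : Real.exp (Real.exp (α₂*((i.1+1:ℕ):ℝ))) < 2*x := by
        have := Real.exp_pos (α₁*((n i : ℕ):ℝ)); linarith
      have hky : Real.exp (α₂*((i.1+1:ℕ):ℝ)) < y := by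
        rw [hydef]; exact (Real.lt_log_iff_exp_lt h2x).mpr hE2
      have hmax : (0:ℝ) < max y 1 := lt_of_lt_of_le one_pos (le_max_right _ _)
      have hkz : α₂*((i.1+1:ℕ):ℝ) < z := by
        rw [hzdef]
        exact (Real.lt_log_iff_exp_lt hmax).mpr (lt_of_lt_of_le hky (le_max_left _ _))
      have hKle : i.1 + 1 ≤ K := by
        rw [hKdef]
        exact Nat.le_floor ((le_div_iff₀ hα₂).mpr (by push_cast; push_cast at hkz; linarith [mul_comm α₂ ((i.1:ℝ)+1)]))
      exact ⟨h2, hJle, by omega⟩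
    -- Step 2: cardinality bound
    have hcount : infoN γ lam ε d ≤ (((J+2)^K : ℕ) : ℕ∞) := by
      rw [infoN]
      classical
      set S := {n : Fin d → ℕ | (∀ i, 1 ≤ n i) ∧ ε ^ 2 < ∏ i, lamKJ γ lam (i.1 + 1) (n i)} with hS
      set F : (Fin d → ℕ) → (Fin K → Fin (J+2)) := fun n i =>
        ⟨min (if h : (i:ℕ) < d then n ⟨(i:ℕ), h⟩ else 0) (J+1), by
          have := Nat.min_le_right (if h : (i:ℕ) < d then n ⟨(i:ℕ), h⟩ else 0) (J+1); omega⟩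
        with hF
      have hub : ∀ n ∈ S, ∀ i : Fin d, n i ≤ J + 1 := by
        intro n hn i
        rcases step1 n hn i with h | ⟨_, h, _⟩ <;> omega
      have hinj : Set.InjOn F S := by
        intro n hn m hm hFe
        funext i
        by_cases hiK : (i:ℕ) < K
        · have h1 := congrArg Fin.val (congrFun hFe ⟨i.1, hiK⟩)
          simp only [hF, dif_pos i.2, Fin.eta] at h1
          have hn' := hub n hn i
          have hm' := hub m hm i
          omega
        · rcases step1 n hn i with h | ⟨_, _, h⟩
          · rcases step1 m hm i with g | ⟨_, _, g⟩
            · rw [h, g]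
            · omega
          · omega
      calc S.encard = (F '' S).encard := hinj.encard_image.symm
        _ ≤ (Set.univ : Set (Fin K → Fin (J+2))).encard := Set.encard_mono (Set.subset_univ _)
        _ = (((J+2)^K : ℕ) : ℕ∞) := by
            rw [Set.encard_univ, ENat.card_eq_coe_fintype_card]
            simp
    -- Step 3: analytic bound
    have hxp1 : (0:ℝ) < 1 + x := by linarith
    have hreal : ((((J+2)^K : ℕ)):ℝ) ≤ C * (1+x)^p := by
      have hrpow1 : 1 ≤ (1+x)^p := by
        calc (1:ℝ) = 1^p := (Real.one_rpow p).symm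
          _ ≤ (1+x)^p := Real.rpow_le_rpow zero_le_one (by linarith) hp.le
      rcases Nat.eq_zero_or_pos K with hK0 | hKpos
      · rw [hK0]
        push_cast
        simp only [pow_zero]
        nlinarith
      · have hz1 : 1 ≤ z/α₂ := Nat.floor_pos.mp (by rw [← hKdef]; exact hKpos)
        have hzα : α₂ ≤ z := by
          have := (le_div_iff₀ hα₂).mp hz1; linarith
        have hy1 : 1 < y := by
          by_contra hy
          push_neg at hy
          rw [hzdef, max_eq_right hy, Real.log_one] at hzα
          linarith
        have hz_eq : z = Real.log y := by rw [hzdef, max_eq_left hy1.le]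
        have hy0 : 0 < y := by linarith
        have hlogy0 : 0 < Real.log y := by rw [← hz_eq]; linarith
        have hKle : (K:ℝ) ≤ Real.log y / α₂ := by
          rw [hKdef, ← hz_eq]
          exact Nat.floor_le (div_nonneg (by linarith) hα₂.le)
        have hJle : (J:ℝ) ≤ y/α₁ := by
          rw [hJdef]
          exact Nat.floor_le (div_nonneg (by linarith) hα₁.le)
        set s := Real.sqrt (Real.sqrt y) with hs
        have hsy : s^2 = Real.sqrt y := Real.sq_sqrt (Real.sqrt_nonneg y)
        have hs4 : (s^2)^2 = y := by rw [hsy]; exact Real.sq_sqrt hy0.le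
        have hs1 : 1 ≤ s := Real.one_le_sqrt.mpr (Real.one_le_sqrt.mpr hy1.le)
        have hlogy : Real.log y ≤ 4*s := by
          have hys : y = s^4 := by rw [show s^4 = (s^2)^2 by ring, hs4]
          have hls : Real.log s ≤ s - 1 := Real.log_le_sub_one_of_pos (by linarith)
          calc Real.log y = Real.log (s^4) := by rw [← hys]
            _ = 4 * Real.log s := by rw [Real.log_pow]; norm_num
            _ ≤ 4*(s-1) := by linarith
            _ ≤ 4*s := by linarith
        have hlog2 : Real.log ((J:ℝ)+2) ≤ Real.log y + c₂ := by
          have hJ1 : (J:ℝ)+2 ≤ (1/α₁+2)*y := by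
            have h2y : (2:ℝ) ≤ 2*y := by linarith
            have : (J:ℝ)+2 ≤ y/α₁ + 2*y := by linarith
            calc (J:ℝ)+2 ≤ y/α₁ + 2*y := this
              _ = (1/α₁+2)*y := by ring
          calc Real.log ((J:ℝ)+2) ≤ Real.log ((1/α₁+2)*y) :=
                Real.log_le_log (by positivity) hJ1
            _ = c₂ + Real.log y := by
                rw [Real.log_mul (by positivity) (by positivity)]
            _ = Real.log y + c₂ := by ring
        have hlogJ2 : 0 ≤ Real.log ((J:ℝ)+2) :=
          Real.log_nonneg (by have : (0:ℝ) ≤ (J:ℝ) := Nat.cast_nonneg J; linarith)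
        have hmain : (K:ℝ) * Real.log ((J:ℝ)+2) ≤ A * Real.sqrt y := by
          have h1 : (K:ℝ) * Real.log ((J:ℝ)+2) ≤ (Real.log y/α₂) * (Real.log y + c₂) :=
            mul_le_mul hKle hlog2 hlogJ2 (by positivity)
          have h2 : (Real.log y) * (Real.log y + c₂) ≤ (4*s)*(4*s+c₂) := by
            apply mul_le_mul hlogy (by linarith) (by linarith) (by linarith)
          have h3 : (4*s)*(4*s+c₂) ≤ (16+4*c₂)*s^2 := by
            nlinarith [mul_nonneg hc₂ (mul_nonneg (by linarith : (0:ℝ) ≤ s) (by linarith : (0:ℝ) ≤ s - 1))]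
          have h4 : (Real.log y/α₂) * (Real.log y + c₂) ≤ ((16+4*c₂)*s^2)/α₂ := by
            rw [div_mul_eq_mul_div]
            gcongr ?_ / α₂
            linarith
          have h5 : ((16+4*c₂)*s^2)/α₂ = A * Real.sqrt y := by
            rw [hAdef, hsy]; ring
          linarith
        have hts : Real.sqrt y ^ 2 = y := Real.sq_sqrt hy0.le
        have hAM : A * Real.sqrt y ≤ p*y + A^2/(4*p) := by
          have h4p : (0:ℝ) < 4*p := by linarith
          have hdiv : 4*p*(A^2/(4*p)) = A^2 := by field_simp
          have hk0 : 4*p*(A*Real.sqrt y) ≤ 4*p*(p*(Real.sqrt y^2)) + A^2 := by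
            nlinarith [sq_nonneg (2*p*Real.sqrt y - A)]
          rw [hts] at hk0
          have hk : 4*p*(A*Real.sqrt y) ≤ 4*p*(p*y + A^2/(4*p)) := by
            rw [mul_add, hdiv]
            exact hk0
          exact le_of_mul_le_mul_left hk h4p
        have hxpos : 0 < x := by
          rcases lt_or_eq_of_le hx with h | h
          · exact h
          · exfalso
            rw [hydef, ← h, mul_zero, Real.log_zero] at hy1
            linarith
        have hylog : y ≤ Real.log 2 + Real.log (1+x) := by
          rw [hydef, Real.log_mul two_ne_zero (ne_of_gt hxpos)]
          have : Real.log x ≤ Real.log (1+x) := Real.log_le_log hxpos (by linarith)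
          linarith
        have hexp : (K:ℝ) * Real.log ((J:ℝ)+2) ≤ (A^2/(4*p) + p*Real.log 2) + p * Real.log (1+x) := by
          have hpy : p*y ≤ p*(Real.log 2 + Real.log (1+x)) := mul_le_mul_of_nonneg_left hylog hp.le
          nlinarith
        calc ((((J+2)^K : ℕ)):ℝ) = ((J:ℝ)+2)^K := by push_cast; ring
          _ = Real.exp ((K:ℝ) * Real.log ((J:ℝ)+2)) := by
              rw [← Real.log_pow, Real.exp_log (by positivity)]
          _ ≤ Real.exp ((A^2/(4*p)+p*Real.log 2) + p*Real.log (1+x)) := Real.exp_le_exp.mpr hexp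
          _ = C * (1+x)^p := by
              rw [Real.exp_add, hCdef, Real.rpow_def_of_pos hxp1, mul_comm (Real.log (1+x)) p]
    -- conclude
    calc (infoN γ lam ε d : ℝ≥0∞) ≤ ((((J+2)^K : ℕ) : ℕ∞) : ℝ≥0∞) := ENat.toENNReal_le.mpr hcount
      _ = (((J+2)^K : ℕ) : ℝ≥0∞) := ENat.toENNReal_coe _
      _ = ENNReal.ofReal ((((J+2)^K : ℕ)):ℝ) := (ENNReal.ofReal_natCast _).symm
      _ ≤ ENNReal.ofReal (C * (1+x)^p) := ENNReal.ofReal_le_ofReal hreal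
  exact ⟨⟨1, zero_le_one, key 1 one_pos⟩, key⟩
end
end
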